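/- Let M be a loopless matroid with weights x : E → ℝ, B an x-optimal basis, and e ∉ B. Then the minimum weight of a basis containing e equals x(B) - μ_e(x) + x(e). -/

import Mathlib

open Matroid Set

variable {α : Type*}

/-- A circuit of a matroid: a minimal dependent set. -/
def Matroid.PaperIsCircuit (M : Matroid α) (C : Set α) : Prop :=
  M.Dep C ∧ ∀ ⦃D⦄, D ⊂ C → M.Indep D

/-- Looplessness in the sense of the paper: no element is a loop
(every singleton of the ground set is independent) and no element is a
coloop (no element lies in all bases). -/
def Matroid.PaperLoopless (M : Matroid α) : Prop :=
  ∀ e ∈ M.E, M.Indep {e} ∧ ∃ B, M.IsBase B ∧ e ∉ B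

/-- The weight `x(B)` of a set of ground elements. -/
noncomputable def setWeight (x : α → ℝ) (B : Set α) : ℝ := ∑ᶠ e ∈ B, x e

/-- The min-max weight `μ_e(x)`: the minimum over circuits `C` containing `e`
of the maximum weight of an element of `C - e`. -/
noncomputable def muWeight (M : Matroid α) (x : α → ℝ) (e : α) : ℝ :=
  sInf {w | ∃ C, M.PaperIsCircuit C ∧ e ∈ C ∧ w = sSup (x '' (C \ {e}))}

/-- The bottleneck weight `b_e(x) = min {x(e), μ_e(x)}`. -/
noncomputable def bottleneck (M : Matroid α) (x : α → ℝ) (e : α) : ℝ :=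
  min (x e) (muWeight M x e)

/-- The minimum weight of a basis of `M`. -/
noncomputable def mwb (M : Matroid α) (x : α → ℝ) : ℝ :=
  sInf {w | ∃ B, M.IsBase B ∧ w = setWeight x B}

/-- `B` is an `x`-optimal basis of `M`. -/
def IsOptimalBase (M : Matroid α) (x : α → ℝ) (B : Set α) : Prop :=
  M.IsBase B ∧ ∀ B', M.IsBase B' → setWeight x B ≤ setWeight x B'

/-- Deletion of a single element. -/
noncomputable def Matroid.del (M : Matroid α) (e : α) : Matroid α :=
  M ↾ (M.E \ {e})

/-- Contraction of a single element, defined by duality: `M/e = (M✶ \ e)✶`. -/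
noncomputable def Matroid.con (M : Matroid α) (e : α) : Matroid α :=
  ((M✶ ↾ (M.E \ {e}))✶)

/-!
Let `C₀` be the fundamental circuit of `e` with respect to the optimal basis `B`, and `f₀` a
heaviest element of `C₀ - e`. Exchanging `f₀` for `e` gives a basis containing `e` of weight
`x(B) - x(f₀) + x(e) ≤ x(B) - μ_e(x) + x(e)`. Conversely, if `B'` is any basis containing `e` and
`C` is a circuit through `e` realising `μ_e(x)`, then `C` meets the fundamental cocircuit of `e`
in `B'` in a second element `f`, and `B' - e + f` is a basis; optimality of `B` gives
`x(B) ≤ x(B') - x(e) + x(f) ≤ x(B') - x(e) + μ_e(x)`.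
-/

namespace Matroid

variable {M : Matroid α} {B C : Set α} {e f : α}

theorem paperIsCircuit_iff_isCircuit : M.PaperIsCircuit C ↔ M.IsCircuit C :=
  isCircuit_iff_forall_ssubset.symm

theorem IsCircuit.sdiff_singleton_nonempty (hC : M.IsCircuit C) (he : M.Indep {e}) :
    (C \ {e}).Nonempty :=
  nonempty_iff_ne_empty.2 fun h ↦ hC.not_indep (he.subset (sdiff_eq_empty.1 h))

theorem IsBase.isBase_insert_sdiff_of_mem_fundCircuit (hB : M.IsBase B) (heB : e ∈ B)
    (hfE : f ∈ M.E) (hfB : f ∉ B) (he : e ∈ M.fundCircuit f B) :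
    M.IsBase (insert f B \ {e}) :=
  hB.exchange_isBase_of_indep' heB hfB <|
    (hB.indep.mem_fundCircuit_iff (by rwa [hB.closure_eq]) hfB).1 he

theorem IsBase.exists_isBase_exchange_of_isCircuit (hB : M.IsBase B) (heB : e ∈ B)
    (hC : M.IsCircuit C) (heC : e ∈ C) :
    ∃ f ∈ C \ {e}, f ∉ B ∧ M.IsBase (insert f B \ {e}) := by
  have hK := fundCocircuit_isCocircuit heB hB
  obtain ⟨f, ⟨hfC, hfK⟩, hfe⟩ :=
    (hC.isCocircuit_inter_nontrivial hK ⟨e, heC, M.mem_fundCocircuit e B⟩).exists_ne e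
  have hfB : f ∉ B := fun hfB ↦ hfe <| by
    simpa using (M.fundCocircuit_inter_eq heB).subset ⟨hfK, hfB⟩
  exact ⟨f, ⟨hfC, hfe⟩, hfB, hB.isBase_insert_sdiff_of_mem_fundCircuit heB
    (hC.subset_ground hfC) hfB (hB.mem_fundCocircuit_iff_mem_fundCircuit.1 hfK)⟩

end Matroid

section Weights

variable {M : Matroid α} {x : α → ℝ} {B B' C : Set α} {e f : α}

theorem setWeight_insert_sdiff_singleton (x : α → ℝ) (hB : B.Finite) (he : e ∈ B) (hf : f ∉ B) :
    setWeight x (insert f B \ {e}) = setWeight x B - x e + x f := by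
  obtain ⟨D, heD, rfl⟩ : ∃ D : Set α, e ∉ D ∧ B = insert e D :=
    ⟨B \ {e}, fun h ↦ h.2 rfl, by rw [insert_sdiff_singleton, insert_eq_of_mem he]⟩
  obtain ⟨hfe, hfD⟩ : f ≠ e ∧ f ∉ D := by simpa using hf
  have hD : D.Finite := hB.subset (subset_insert e D)
  rw [show insert f (insert e D) \ {e} = insert f D by aesop, setWeight, setWeight,
    finsum_mem_insert x hfD hD, finsum_mem_insert x heD hD]
  ring

theorem muWeight_set_finite (M : Matroid α) [M.Finite] (x : α → ℝ) (e : α) :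
    {w | ∃ C, M.PaperIsCircuit C ∧ e ∈ C ∧ w = sSup (x '' (C \ {e}))}.Finite := by
  refine (M.ground_finite.finite_subsets.image fun C ↦ sSup (x '' (C \ {e}))).subset ?_
  rintro w ⟨C, hC, -, rfl⟩
  exact ⟨C, hC.1.subset_ground, rfl⟩

theorem muWeight_le [M.Finite] (x : α → ℝ) (hC : M.IsCircuit C) (heC : e ∈ C) :
    muWeight M x e ≤ sSup (x '' (C \ {e})) :=
  csInf_le (muWeight_set_finite M x e).bddBelow
    ⟨C, paperIsCircuit_iff_isCircuit.2 hC, heC, rfl⟩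

theorem exists_isCircuit_muWeight_eq [M.Finite] (x : α → ℝ) (hC : M.IsCircuit C) (heC : e ∈ C) :
    ∃ C', M.IsCircuit C' ∧ e ∈ C' ∧ muWeight M x e = sSup (x '' (C' \ {e})) := by
  obtain ⟨C', hC', heC', hμ⟩ : muWeight M x e ∈ _ := Nonempty.csInf_mem
    ⟨_, C, paperIsCircuit_iff_isCircuit.2 hC, heC, rfl⟩ (muWeight_set_finite M x e)
  exact ⟨C', paperIsCircuit_iff_isCircuit.1 hC', heC', hμ⟩

theorem IsOptimalBase.setWeight_le_of_isCircuit [M.Finite] (hB : IsOptimalBase M x B)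
    (hB' : M.IsBase B') (heB' : e ∈ B') (hC : M.IsCircuit C) (heC : e ∈ C) :
    setWeight x B ≤ setWeight x B' - x e + sSup (x '' (C \ {e})) := by
  obtain ⟨f, hf, hfB', hbase⟩ := hB'.exists_isBase_exchange_of_isCircuit heB' hC heC
  have hxf : x f ≤ sSup (x '' (C \ {e})) :=
    le_csSup ((M.set_finite C hC.subset_ground).sdiff.image x).bddAbove (mem_image_of_mem x hf)
  have := setWeight_insert_sdiff_singleton x (M.set_finite B' hB'.subset_ground) heB' hfB'
  linarith [hB.2 _ hbase]

theorem Matroid.IsBase.exists_isBase_exchange_eq_sSup_fundCircuit [M.Finite] (x : α → ℝ)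
    (hB : M.IsBase B) (he : M.Indep {e}) (heB : e ∉ B) :
    ∃ f ∈ B, M.IsBase (insert e B \ {f}) ∧ x f = sSup (x '' (M.fundCircuit e B \ {e})) := by
  have hC₀ := hB.fundCircuit_isCircuit (he.subset_ground rfl) heB
  obtain ⟨f, ⟨hfC, hfe⟩, hfmax⟩ := ((hC₀.sdiff_singleton_nonempty he).image x).csSup_mem
    (((M.set_finite _ hC₀.subset_ground).sdiff).image x)
  have hfB : f ∈ B := (M.fundCircuit_subset_insert e B hfC).resolve_left hfe
  exact ⟨f, hfB, hB.isBase_insert_sdiff_of_mem_fundCircuit hfB (he.subset_ground rfl) heB hfC,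
    hfmax⟩

end Weights

/-- the minimum weight of a basis containing `e` is
`x(B) - μ_e(x) + x(e)`. -/
theorem stmt8 (M : Matroid α) [M.Finite] (hM : M.PaperLoopless)
    (x : α → ℝ) {B : Set α} (hB : IsOptimalBase M x B)
    {e : α} (he : e ∈ M.E) (heB : e ∉ B) :
    sInf {w | ∃ B', M.IsBase B' ∧ e ∈ B' ∧ w = setWeight x B'} =
      setWeight x B - muWeight M x e + x e := by
  have hC₀ := hB.1.fundCircuit_isCircuit he heB
  obtain ⟨C, hC, heC, hμ⟩ := exists_isCircuit_muWeight_eq x hC₀ (M.mem_fundCircuit e B)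
  have hlower : ∀ B', M.IsBase B' → e ∈ B' →
      setWeight x B - muWeight M x e + x e ≤ setWeight x B' := fun B' hB' heB' ↦ by
    linarith [hB.setWeight_le_of_isCircuit hB' heB' hC heC]
  obtain ⟨f, hfB, hB₀, hf⟩ := hB.1.exists_isBase_exchange_eq_sSup_fundCircuit x (hM e he).1 heB
  have hB₀e : e ∈ insert e B \ {f} := ⟨mem_insert e B, fun h ↦ heB (h ▸ hfB)⟩
  have hw₀ := setWeight_insert_sdiff_singleton x (M.set_finite B hB.1.subset_ground) hfB heB
  have hμf : muWeight M x e ≤ x f := hf ▸ muWeight_le x hC₀ (M.mem_fundCircuit e B)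
  refine IsLeast.csInf_eq ⟨⟨_, hB₀, hB₀e, ?_⟩, ?_⟩
  · linarith [hlower _ hB₀ hB₀e]
  · rintro w ⟨B', hB', heB', rfl⟩
    exact hlower B' hB' heB'
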